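/- arXiv:1112.0089 — 7 statements merged into one kernel-verified Lean document; each statement's English description precedes it below -/
import Mathlib

section
/- For all α, β, γ, δ ∈ ℂ, the matrix S(α,β,γ,δ) is nilpotent if and only if α = −3δ² and βγ = 8δ³. (This identifies the coordinate ring of S = 𝕊 ∩ 𝒩, the intersection of the Slodowy slice with the nilpotent cone, with ℂ[β,γ,δ]/(8δ³ − βγ).) -/
open Matrix

/-- `Smat α β γ δ` is the element of the Slodowy slice `𝕊 = f + sl₃^e` (for the
sl₂-triple `e = E₁₂`, `h = E₁₁ − E₂₂`, `f = E₂₁` in `sl₃`) with rows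
`(δ, α, β)`, `(1, δ, 0)`, `(0, γ, −2δ)`. -/
noncomputable def Smat (α β γ δ : ℂ) : Matrix (Fin 3) (Fin 3) ℂ :=
  !![δ, α, β; 1, δ, 0; 0, γ, -2*δ]

/-- `S(α,β,γ,δ)` is nilpotent iff `α = −3δ²` and `βγ = 8δ³`. -/
theorem Smat_isNilpotent_iff (α β γ δ : ℂ) :
    IsNilpotent (Smat α β γ δ) ↔ α = -3 * δ ^ 2 ∧ β * γ = 8 * δ ^ 3 := by
  constructor
  · intro h
    have h2 : trace ((Smat α β γ δ) ^ 2) = 0 :=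
      isNilpotent_iff_eq_zero.mp
        (Matrix.isNilpotent_trace_of_isNilpotent (h.pow_of_pos (n := 2) two_ne_zero))
    have h3 : trace ((Smat α β γ δ) ^ 3) = 0 :=
      isNilpotent_iff_eq_zero.mp
        (Matrix.isNilpotent_trace_of_isNilpotent (h.pow_of_pos (n := 3) three_ne_zero))
    rw [pow_two] at h2
    rw [pow_succ, pow_two] at h3
    simp [Smat, trace_fin_three, Matrix.mul_apply, Fin.sum_univ_three] at h2 h3
    have hα : α = -3 * δ ^ 2 := by linear_combination (1/2 : ℂ) * h2
    refine ⟨hα, ?_⟩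
    subst hα
    linear_combination (1/3 : ℂ) * h3
  · rintro ⟨hα, hβγ⟩
    subst hα
    refine ⟨3, ?_⟩
    ext i j
    fin_cases i <;> fin_cases j <;>
      simp [Smat, pow_succ, Matrix.mul_apply, Fin.sum_univ_three] <;>
      first
        | ring1
        | linear_combination hβγ
end

section
/- The map sending ((u,v), (α,β,γ,δ)) ∈ ℂ² × ℂ⁴ to X · S(α,β,γ,δ) · X⁻¹, where X = 1 + u·E₁₂ + v·E₁₃ (so X is invertible with X⁻¹ = 1 − u·E₁₂ − v·E₁₃), is a bijection onto the set {A a 3×3 complex matrix : Tr A = 0, A₂₁ = 1, A₃₁ = 0}. Equivalently: for every traceless 3×3 complex matrix A with A₂₁ = 1 and A₃₁ = 0 there exists a unique pair (u,v) ∈ ℂ² such that (1 + uE₁₂ + vE₁₃) A (1 + uE₁₂ + vE₁₃)⁻¹ lies in the Slodowy slice 𝕊. (This is the Gan–Ginzburg isomorphism M × 𝕊 ≅ f + 𝔪^⊥ in the case 𝔤 = sl₃, f = E₂₁, 𝔪 = span{E₁₂, E₁₃}.) -/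
open Matrix

/-- `E i j` is the 3×3 complex matrix with a `1` in position `(i,j)` and `0` elsewhere. -/
noncomputable def E (i j : Fin 3) : Matrix (Fin 3) (Fin 3) ℂ :=
  Matrix.single i j 1

/-!
Conjugation by `X = 1 + u·E₁₂ + v·E₁₃` preserves the trace and the entries `A₂₁`, `A₃₁`; when
`A₂₁ = 1` and `A₃₁ = 0` it adds `u` to `A₁₁`, subtracts `u` from `A₂₂` and subtracts `v` from
`A₂₃`. A matrix of `f + 𝔪^⊥` lies in `𝕊` exactly when `A₁₁ = A₂₂` and `A₂₃ = 0`, so exactly one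
pair works: `u = (A₂₂ - A₁₁)/2`, `v = A₂₃`. Since `X⁻¹ = 1 - u·E₁₂ - v·E₁₃` is again of the same
form, this unique solvability is the bijectivity of `(X, S) ↦ X S X⁻¹`.
-/

namespace GanGinzburg

-- The element `1 + u·E₁₂ + v·E₁₃` of the unipotent group `M = exp 𝔪`.
noncomputable def unip (uv : ℂ × ℂ) : Matrix (Fin 3) (Fin 3) ℂ :=
  1 + uv.1 • E 0 1 + uv.2 • E 0 2

noncomputable def unipConj (uv : ℂ × ℂ) (A : Matrix (Fin 3) (Fin 3) ℂ) :
    Matrix (Fin 3) (Fin 3) ℂ :=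
  unip uv * A * unip (-uv)

def slodowySlice : Set (Matrix (Fin 3) (Fin 3) ℂ) :=
  {A | ∃ α β γ δ, A = Smat α β γ δ}

-- `f + 𝔪^⊥`, the orthogonal complement taken in `sl₃` for the trace form.
def fAddMPerp : Set (Matrix (Fin 3) (Fin 3) ℂ) :=
  {A | A.trace = 0 ∧ A 1 0 = 1 ∧ A 2 0 = 0}

noncomputable def ganGinzburgMap (p : (ℂ × ℂ) × (ℂ × ℂ × ℂ × ℂ)) : Matrix (Fin 3) (Fin 3) ℂ :=
  unipConj p.1 (Smat p.2.1 p.2.2.1 p.2.2.2.1 p.2.2.2.2)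

lemma unip_neg (uv : ℂ × ℂ) : unip (-uv) = 1 - uv.1 • E 0 1 - uv.2 • E 0 2 := by
  simp [unip, sub_eq_add_neg]

lemma unip_mul_unip_neg (uv : ℂ × ℂ) : unip uv * unip (-uv) = 1 := by
  ext i j
  fin_cases i <;> fin_cases j <;>
    simp [unip, E, mul_apply, Fin.sum_univ_three, one_apply, single]

lemma unip_neg_mul_unip (uv : ℂ × ℂ) : unip (-uv) * unip uv = 1 := by
  simpa using unip_mul_unip_neg (-uv)

lemma unipConj_neg_unipConj (uv : ℂ × ℂ) (A : Matrix (Fin 3) (Fin 3) ℂ) :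
    unipConj (-uv) (unipConj uv A) = A :=
  calc unipConj (-uv) (unipConj uv A)
      = unip (-uv) * unip uv * A * (unip (-uv) * unip uv) := by
        simp only [unipConj, neg_neg, Matrix.mul_assoc]
    _ = A := by rw [unip_neg_mul_unip, Matrix.one_mul, Matrix.mul_one]

lemma trace_unipConj (uv : ℂ × ℂ) (A : Matrix (Fin 3) (Fin 3) ℂ) :
    (unipConj uv A).trace = A.trace := by
  rw [unipConj, trace_mul_cycle, unip_neg_mul_unip, Matrix.one_mul]

lemma unipConj_eq (uv : ℂ × ℂ) (A : Matrix (Fin 3) (Fin 3) ℂ) :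
    unipConj uv A =
      let a₀ := fun j => A 0 j + uv.1 * A 1 j + uv.2 * A 2 j
      !![a₀ 0, a₀ 1 - a₀ 0 * uv.1, a₀ 2 - a₀ 0 * uv.2;
        A 1 0, A 1 1 - A 1 0 * uv.1, A 1 2 - A 1 0 * uv.2;
        A 2 0, A 2 1 - A 2 0 * uv.1, A 2 2 - A 2 0 * uv.2] := by
  ext i j
  fin_cases i <;> fin_cases j <;>
    simp [unipConj, unip, E, mul_apply, Fin.sum_univ_three, one_apply, single] <;>
    ring

lemma unipConj_mem_fAddMPerp {A : Matrix (Fin 3) (Fin 3) ℂ} (hA : A ∈ fAddMPerp)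
    (uv : ℂ × ℂ) : unipConj uv A ∈ fAddMPerp := by
  obtain ⟨htr, h10, h20⟩ := hA
  refine ⟨by rw [trace_unipConj, htr], ?_, ?_⟩ <;> simp [unipConj_eq, h10, h20]

lemma mem_slodowySlice_iff {A : Matrix (Fin 3) (Fin 3) ℂ} :
    A ∈ slodowySlice ↔ A ∈ fAddMPerp ∧ A 1 1 = A 0 0 ∧ A 1 2 = 0 := by
  constructor
  · rintro ⟨α, β, γ, δ, rfl⟩
    refine ⟨⟨?_, rfl, rfl⟩, rfl, rfl⟩
    rw [trace_fin_three]
    show δ + δ + -2 * δ = 0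
    ring
  · rintro ⟨⟨htr, h10, h20⟩, h11, h12⟩
    refine ⟨A 0 1, A 0 2, A 2 1, A 0 0, ?_⟩
    have h22 : A 2 2 = -2 * A 0 0 := by
      rw [trace_fin_three] at htr
      linear_combination htr - h11
    ext i j
    fin_cases i <;> fin_cases j <;> simp [Smat, h10, h20, h11, h12, h22]

lemma slodowySlice_subset_fAddMPerp : slodowySlice ⊆ fAddMPerp :=
  fun _ hA => (mem_slodowySlice_iff.1 hA).1

noncomputable def sliceParam (A : Matrix (Fin 3) (Fin 3) ℂ) : ℂ × ℂ :=
  ((A 1 1 - A 0 0) / 2, A 1 2)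

lemma unipConj_mem_slodowySlice_iff {A : Matrix (Fin 3) (Fin 3) ℂ} (hA : A ∈ fAddMPerp)
    (uv : ℂ × ℂ) : unipConj uv A ∈ slodowySlice ↔ uv = sliceParam A := by
  rw [mem_slodowySlice_iff, Prod.ext_iff]
  simp only [unipConj_mem_fAddMPerp hA, true_and]
  obtain ⟨-, h10, h20⟩ := hA
  simp only [unipConj_eq, sliceParam, h10, h20, mul_one, mul_zero, add_zero, one_mul, zero_mul,
    sub_zero, of_apply, cons_val', cons_val_one, cons_val_zero, cons_val_fin_one, cons_val]
  refine and_congr ⟨fun h => ?_, fun h => ?_⟩ (sub_eq_zero.trans eq_comm)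
  · linear_combination -h / 2
  · linear_combination -2 * h

theorem existsUnique_unipConj_mem_slodowySlice {A : Matrix (Fin 3) (Fin 3) ℂ}
    (hA : A ∈ fAddMPerp) : ∃! uv : ℂ × ℂ, unipConj uv A ∈ slodowySlice :=
  ⟨sliceParam A, (unipConj_mem_slodowySlice_iff hA _).2 rfl,
    fun uv h => (unipConj_mem_slodowySlice_iff hA uv).1 h⟩

lemma Smat_injective :
    Function.Injective fun s : ℂ × ℂ × ℂ × ℂ => Smat s.1 s.2.1 s.2.2.1 s.2.2.2 := by
  rintro ⟨α, β, γ, δ⟩ ⟨α', β', γ', δ'⟩ h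
  have e := fun i j => congrFun (congrFun h i) j
  simp only [Prod.mk.injEq]
  exact ⟨by simpa [Smat] using e 0 1, by simpa [Smat] using e 0 2,
    by simpa [Smat] using e 2 1, by simpa [Smat] using e 0 0⟩

lemma ganGinzburgMap_mem_fAddMPerp (p : (ℂ × ℂ) × (ℂ × ℂ × ℂ × ℂ)) :
    ganGinzburgMap p ∈ fAddMPerp :=
  unipConj_mem_fAddMPerp (slodowySlice_subset_fAddMPerp ⟨_, _, _, _, rfl⟩) _

lemma ganGinzburgMap_injective : Function.Injective ganGinzburgMap := by
  rintro ⟨uv, s⟩ ⟨uv', s'⟩ h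
  set T := ganGinzburgMap (uv, s)
  have hT : unipConj (-uv) T = Smat s.1 s.2.1 s.2.2.1 s.2.2.2 := unipConj_neg_unipConj _ _
  have hT' : unipConj (-uv') T = Smat s'.1 s'.2.1 s'.2.2.1 s'.2.2.2 := by
    rw [h]; exact unipConj_neg_unipConj _ _
  have huv : uv = uv' := by
    have hmem := ganGinzburgMap_mem_fAddMPerp (uv, s)
    rw [← neg_inj, (unipConj_mem_slodowySlice_iff hmem _).1 ⟨_, _, _, _, hT⟩,
      (unipConj_mem_slodowySlice_iff hmem _).1 ⟨_, _, _, _, hT'⟩]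
  subst huv
  rw [Smat_injective (hT.symm.trans hT')]

theorem bijOn_ganGinzburgMap : Set.BijOn ganGinzburgMap Set.univ fAddMPerp := by
  refine ⟨fun p _ => ganGinzburgMap_mem_fAddMPerp p, ganGinzburgMap_injective.injOn,
    fun A hA => ?_⟩
  obtain ⟨α, β, γ, δ, hS⟩ := (unipConj_mem_slodowySlice_iff hA _).2 rfl
  exact ⟨(-sliceParam A, (α, β, γ, δ)), trivial, by
    rw [ganGinzburgMap, ← hS, unipConj_neg_unipConj]⟩

end GanGinzburg

open GanGinzburg in
/-- The Gan–Ginzburg isomorphism `M × 𝕊 ≅ f + 𝔪^⊥` for `𝔤 = sl₃`, `f = E₂₁`,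
`𝔪 = span{E₁₂, E₁₃}`: the map `((u,v), (α,β,γ,δ)) ↦ X · S(α,β,γ,δ) · X⁻¹`, where
`X = 1 + u·E₁₂ + v·E₁₃` (so that `X⁻¹ = 1 − u·E₁₂ − v·E₁₃`), is a bijection onto
`{A : Tr A = 0, A₂₁ = 1, A₃₁ = 0}`.  Equivalently, for every traceless `A` with
`A₂₁ = 1`, `A₃₁ = 0` there is a unique `(u,v) ∈ ℂ²` conjugating `A` into the
Slodowy slice. -/
theorem ganGinzburg_sl3 :
    Set.BijOn
      (fun p : (ℂ × ℂ) × (ℂ × ℂ × ℂ × ℂ) =>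
        (1 + p.1.1 • E 0 1 + p.1.2 • E 0 2) *
          Smat p.2.1 p.2.2.1 p.2.2.2.1 p.2.2.2.2 *
        (1 - p.1.1 • E 0 1 - p.1.2 • E 0 2))
      Set.univ
      {A : Matrix (Fin 3) (Fin 3) ℂ | A.trace = 0 ∧ A 1 0 = 1 ∧ A 2 0 = 0} ∧
    ∀ A : Matrix (Fin 3) (Fin 3) ℂ, A.trace = 0 → A 1 0 = 1 → A 2 0 = 0 →
      ∃! uv : ℂ × ℂ, ∃ α β γ δ : ℂ,
        (1 + uv.1 • E 0 1 + uv.2 • E 0 2) * A * (1 - uv.1 • E 0 1 - uv.2 • E 0 2) =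
          Smat α β γ δ := by
  simp only [← unip_neg]
  exact ⟨bijOn_ganGinzburgMap, fun A htr h10 h20 =>
    existsUnique_unipConj_mem_slodowySlice ⟨htr, h10, h20⟩⟩
end

section
/- In the polynomial ring ℂ[α,β,γ,δ] in four variables, the ideal of all polynomials vanishing at every point (α,β,γ,δ) ∈ ℂ⁴ satisfying α = −3δ² and βγ = 8δ³ equals the ideal generated by the two polynomials α + 3δ² and βγ − 8δ³. (Hence the coordinate ring of S = 𝕊 ∩ 𝒩 for sl₃, f = E₂₁, is ℂ[α,β,γ,δ]/(α + 3δ², βγ − 8δ³) ≅ ℂ[β,γ,δ]/(8δ³ − βγ).) -/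
/-! The ideal `I = (α + 3δ², βγ − 8δ³)` is prime, so by the Nullstellensatz it is the vanishing
ideal of its zero locus, which is the given set. For primality, substitute `α ↦ −3δ²` and view
the result in `K[β,γ][δ]`: this identifies `K[α,β,γ,δ]/(α + 3δ²)` with `K[β,γ][δ]` and `I` with
the preimage of `(−8δ³ + βγ)`, a prime ideal since `−8δ³ + βγ` is Eisenstein at the prime `β`
of the UFD `K[β,γ]`. -/

open MvPolynomial

theorem Polynomial.irreducible_C_mul_X_pow_add_C_mul {R : Type*} [CommRing R] [IsDomain R]
    {a b u : R} (ha : Prime a) (hab : ¬ a ∣ b) (hu : IsUnit u) {n : ℕ} (hn : n ≠ 0) :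
    Irreducible (C u * X ^ n + C (a * b)) := by
  have hdeg : (C u * X ^ n + C (a * b)).degree = (n : WithBot ℕ) := by
    compute_degree!
    simpa [hn] using hu.ne_zero
  have hcoeff (k : ℕ) : (C u * X ^ n + C (a * b)).coeff k =
      (if k = n then u else 0) + (if k = 0 then a * b else 0) := by
    simp [coeff_C]
  have hlead : (C u * X ^ n + C (a * b)).leadingCoeff = u := by
    rw [leadingCoeff, natDegree_eq_of_degree_eq_some hdeg, hcoeff]; simp [hn]
  refine irreducible_of_eisenstein_criterion (P := Ideal.span {a})
    ((Ideal.span_singleton_prime ha.ne_zero).mpr ha) ?_ ?_ ?_ ?_ ?_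
  · rw [hlead, Ideal.mem_span_singleton]
    exact fun h => ha.not_isUnit (isUnit_of_dvd_unit h hu)
  · intro k hk
    rw [hdeg, Nat.cast_lt] at hk
    rw [hcoeff, if_neg hk.ne, zero_add]
    split_ifs
    · exact Ideal.mul_mem_right _ _ (Ideal.mem_span_singleton_self a)
    · exact zero_mem _
  · rw [hdeg]; exact_mod_cast Nat.pos_of_ne_zero hn
  · rw [hcoeff, if_neg (Ne.symm hn), if_pos rfl, zero_add, Ideal.span_singleton_pow,
      Ideal.mem_span_singleton, pow_two]
    exact fun h => hab ((mul_dvd_mul_iff_left ha.ne_zero).mp h)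
  · intro r hr
    rw [C_dvd_iff_dvd_coeff] at hr
    have hrn := hr n
    rw [hcoeff, if_pos rfl, if_neg hn, add_zero] at hrn
    exact isUnit_of_dvd_unit hrn hu

theorem MvPolynomial.sub_aeval_update_X_mem_span {R σ : Type*} [CommRing R] [DecidableEq σ]
    (i : σ) (f p : MvPolynomial σ R) :
    p - aeval (Function.update X i f) p ∈ Ideal.span {X i - f} := by
  set I := Ideal.span {X i - f}
  have hmk : (Ideal.Quotient.mkₐ R I).comp (aeval (Function.update X i f)) =
      Ideal.Quotient.mkₐ R I := by
    ext j
    by_cases hj : j = i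
    · subst hj
      simp only [AlgHom.coe_comp, Function.comp_apply, aeval_X, Function.update_self,
        Ideal.Quotient.mkₐ_eq_mk, Ideal.Quotient.eq, I]
      exact Ideal.mem_span_singleton.mpr ⟨-1, by ring⟩
    · simp [hj]
  rw [← Ideal.Quotient.eq]
  exact (DFunLike.congr_fun hmk p).symm

section Slice

variable {K : Type*} [Field K]

noncomputable def toPolyDelta :
    MvPolynomial (Fin 4) K →ₐ[K] Polynomial (MvPolynomial (Fin 2) K) :=
  aeval ![-3 * Polynomial.X ^ 2, Polynomial.C (X 0), Polynomial.C (X 1), Polynomial.X]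

noncomputable def ofPolyDelta : Polynomial (MvPolynomial (Fin 2) K) →+* MvPolynomial (Fin 4) K :=
  Polynomial.eval₂RingHom (rename ![1, 2]).toRingHom (X 3)

theorem ofPolyDelta_toPolyDelta (p : MvPolynomial (Fin 4) K) :
    ofPolyDelta (toPolyDelta p) = aeval (Function.update X 0 (-3 * X 3 ^ 2)) p := by
  refine RingHom.congr_fun (f := ofPolyDelta.comp toPolyDelta.toRingHom)
    (g := (aeval (Function.update X 0 (-3 * X 3 ^ 2))).toRingHom)
    (MvPolynomial.ringHom_ext (fun r => ?_) (fun i => ?_)) p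
  · simp [toPolyDelta, ofPolyDelta]
  · fin_cases i <;> simp [toPolyDelta, ofPolyDelta, Function.update]

noncomputable def sliceIdeal (K : Type*) [Field K] : Ideal (MvPolynomial (Fin 4) K) :=
  Ideal.span {X 0 + 3 * X 3 ^ 2, X 1 * X 2 - 8 * X 3 ^ 3}

theorem comap_toPolyDelta_span :
    Ideal.comap (toPolyDelta (K := K))
        (Ideal.span {Polynomial.C (-8) * Polynomial.X ^ 3 + Polynomial.C (X 0 * X 1)}) =
      sliceIdeal K := by
  have hg₁ : toPolyDelta (X 0 + 3 * X 3 ^ 2 : MvPolynomial (Fin 4) K) = 0 := by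
    simp [toPolyDelta]
    ring
  have hg₂ : toPolyDelta (X 1 * X 2 - 8 * X 3 ^ 3 : MvPolynomial (Fin 4) K) =
      Polynomial.C (-8) * Polynomial.X ^ 3 + Polynomial.C (X 0 * X 1) := by
    simp [toPolyDelta, map_ofNat]
    ring
  apply le_antisymm
  · intro p hp
    obtain ⟨h, hh⟩ := Ideal.mem_span_singleton.mp (Ideal.mem_comap.mp hp)
    have hsub : p - ofPolyDelta (toPolyDelta p) ∈ Ideal.span {X 0 + 3 * X 3 ^ 2} := by
      rw [ofPolyDelta_toPolyDelta]
      have h := sub_aeval_update_X_mem_span (R := K) (0 : Fin 4) (-3 * X 3 ^ 2) p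
      rwa [show (X 0 - -3 * X 3 ^ 2 : MvPolynomial (Fin 4) K) = X 0 + 3 * X 3 ^ 2 by ring] at h
    have hf : ofPolyDelta (Polynomial.C (-8) * Polynomial.X ^ 3 + Polynomial.C (X 0 * X 1)) =
        (X 1 * X 2 - 8 * X 3 ^ 3 : MvPolynomial (Fin 4) K) := by
      simp [ofPolyDelta, map_ofNat]
      ring
    have hp : p = (p - ofPolyDelta (toPolyDelta p)) +
        (X 1 * X 2 - 8 * X 3 ^ 3) * ofPolyDelta h := by
      rw [hh, map_mul, hf]
      ring
    rw [hp]
    exact add_mem (Ideal.span_mono (Set.singleton_subset_iff.mpr (Set.mem_insert _ _)) hsub)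
      (Ideal.mul_mem_right _ _ (Ideal.subset_span (Set.mem_insert_of_mem _ rfl)))
  · rw [sliceIdeal, Ideal.span_le]
    rintro g (rfl | rfl)
    · simp [hg₁]
    · exact Ideal.mem_comap.mpr (hg₂ ▸ Ideal.mem_span_singleton_self _)

theorem isPrime_sliceIdeal (h2 : (2 : K) ≠ 0) : (sliceIdeal K).IsPrime := by
  have hX : ¬ (X 0 : MvPolynomial (Fin 2) K) ∣ X 1 := by
    rintro ⟨g, hg⟩
    simpa using congr_arg (eval ![0, 1]) hg
  have hu : IsUnit (-8 : MvPolynomial (Fin 2) K) := by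
    rw [← map_ofNat C, ← map_neg]
    have h8 : (8 : K) ≠ 0 := by
      rw [show (8 : K) = 2 ^ 3 by norm_num]
      exact pow_ne_zero 3 h2
    exact (isUnit_iff_ne_zero.mpr (neg_ne_zero.mpr h8)).map C
  have hf : Prime (Polynomial.C (-8) * Polynomial.X ^ 3 + Polynomial.C (X 0 * X 1) :
      Polynomial (MvPolynomial (Fin 2) K)) :=
    UniqueFactorizationMonoid.irreducible_iff_prime.mp
      (Polynomial.irreducible_C_mul_X_pow_add_C_mul X_prime hX hu three_ne_zero)
  have := (Ideal.span_singleton_prime hf.ne_zero).mpr hf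
  rw [← comap_toPolyDelta_span]
  exact Ideal.comap_isPrime _ _

end Slice

/-- In `ℂ[α,β,γ,δ]` (with `α = X 0`, `β = X 1`, `γ = X 2`, `δ = X 3`), the ideal
of polynomials vanishing on `{(α,β,γ,δ) ∈ ℂ⁴ : α = −3δ², βγ = 8δ³}` is generated
by `α + 3δ²` and `βγ − 8δ³`. -/
theorem vanishingIdeal_slice_nilpotent_cone :
    MvPolynomial.vanishingIdeal ℂ
        {x : Fin 4 → ℂ | x 0 = -3 * (x 3) ^ 2 ∧ x 1 * x 2 = 8 * (x 3) ^ 3} =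
      Ideal.span {(X 0 : MvPolynomial (Fin 4) ℂ) + 3 * (X 3) ^ 2,
        X 1 * X 2 - 8 * (X 3) ^ 3} := by
  have hset : {x : Fin 4 → ℂ | x 0 = -3 * (x 3) ^ 2 ∧ x 1 * x 2 = 8 * (x 3) ^ 3} =
      zeroLocus ℂ (sliceIdeal ℂ) := by
    ext x
    simp only [sliceIdeal, zeroLocus_span, Set.mem_ofPred_eq, Set.forall_mem_insert,
      Set.mem_singleton_iff, forall_eq, map_add, map_sub, map_mul, map_pow, map_ofNat, aeval_X]
    constructor <;> rintro ⟨h₁, h₂⟩ <;> exact ⟨by linear_combination h₁, by linear_combination h₂⟩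
  have := isPrime_sliceIdeal (K := ℂ) two_ne_zero
  rw [hset, vanishingIdeal_zeroLocus_eq_radical, this.radical, sliceIdeal]
end

section
/- Let φ : ℂ[a,b,h] → R be the ℂ-algebra homomorphism determined by φ(a) = u₁u₂u₃ mod I, φ(b) = v₁v₂v₃ mod I, φ(h) = u₁v₁ mod I. Then the kernel of φ is exactly the principal ideal of ℂ[a,b,h] generated by h³ − a·b. In particular φ induces an injection of ℂ[S] = ℂ[a,b,h]/(h³ − ab) into R. -/
open MvPolynomial

/-- The ideal `I = (u₁v₁ − u₂v₂, u₂v₂ − u₃v₃)` of `P = ℂ[u₁,u₂,u₃,v₁,v₂,v₃]`,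
where `uᵢ = X (i−1)` and `vᵢ = X (i+2)`. -/
noncomputable def Irel : Ideal (MvPolynomial (Fin 6) ℂ) :=
  Ideal.span {X 0 * X 3 - X 1 * X 4, X 1 * X 4 - X 2 * X 5}

/-- The ℂ-algebra map `φ : ℂ[a,b,h] → R = P/I` with `φ(a) = u₁u₂u₃`,
`φ(b) = v₁v₂v₃`, `φ(h) = u₁v₁` (here `a = X 0`, `b = X 1`, `h = X 2`). -/
noncomputable def phi : MvPolynomial (Fin 3) ℂ →ₐ[ℂ] (MvPolynomial (Fin 6) ℂ ⧸ Irel) :=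
  aeval
    ![Ideal.Quotient.mk Irel (X 0 * X 1 * X 2),
      Ideal.Quotient.mk Irel (X 3 * X 4 * X 5),
      Ideal.Quotient.mk Irel (X 0 * X 3)]

noncomputable def mk3 (i j k : ℕ) : Fin 3 →₀ ℕ :=
  Finsupp.single 0 i + Finsupp.single 1 j + Finsupp.single 2 k

noncomputable def mk2 (i j : ℕ) : Fin 2 →₀ ℕ :=
  Finsupp.single 0 i + Finsupp.single 1 j

lemma eq_mk3 (d : Fin 3 →₀ ℕ) : mk3 (d 0) (d 1) (d 2) = d := by
  ext i; fin_cases i <;> simp [mk3, Finsupp.single_apply]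

lemma mono3 (i j k : ℕ) (c : ℂ) :
    (monomial (mk3 i j k) c : MvPolynomial (Fin 3) ℂ) = C c * X 0 ^ i * X 1 ^ j * X 2 ^ k := by
  rw [mk3, X_pow_eq_monomial, X_pow_eq_monomial, X_pow_eq_monomial, C_apply,
    monomial_mul, monomial_mul, monomial_mul]
  simp

lemma mono2 (i j : ℕ) (c : ℂ) :
    (monomial (mk2 i j) c : MvPolynomial (Fin 2) ℂ) = C c * X 0 ^ i * X 1 ^ j := by
  rw [mk2, X_pow_eq_monomial, X_pow_eq_monomial, C_apply, monomial_mul, monomial_mul]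
  simp

/-- The monomial map `χ : ℂ[a,b,h] → ℂ[m,y]`, `a ↦ m³`, `b ↦ y³`, `h ↦ my`. -/
noncomputable def chiAux : MvPolynomial (Fin 3) ℂ →ₐ[ℂ] MvPolynomial (Fin 2) ℂ :=
  aeval ![X 0 ^ 3, X 1 ^ 3, X 0 * X 1]

lemma chi_monomial (d : Fin 3 →₀ ℕ) (c : ℂ) :
    chiAux (monomial d c) = monomial (mk2 (3 * d 0 + d 2) (3 * d 1 + d 2)) c := by
  have h1 : (monomial d c : MvPolynomial (Fin 3) ℂ)
      = C c * X 0 ^ (d 0) * X 1 ^ (d 1) * X 2 ^ (d 2) := by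
    conv_lhs => rw [← eq_mk3 d]
    exact mono3 _ _ _ _
  rw [h1, mono2]
  simp only [chiAux, map_mul, map_pow, aeval_X, aeval_C, Matrix.cons_val_zero,
    Matrix.cons_val_one, Matrix.head_cons, Matrix.cons_val_two, Matrix.tail_cons]
  rw [← pow_mul, ← pow_mul, mul_pow, pow_add, pow_add, algebraMap_eq]
  ring

lemma key_inj (r : MvPolynomial (Fin 3) ℂ) (hs : ∀ d ∈ r.support, d 2 < 3)
    (h0 : chiAux r = 0) : r = 0 := by
  by_contra hne
  obtain ⟨d₀, hd₀⟩ := (support_nonempty (p := r)).mpr hne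
  have hr : chiAux r
      = ∑ d ∈ r.support, monomial (mk2 (3 * d 0 + d 2) (3 * d 1 + d 2)) (coeff d r) := by
    conv_lhs => rw [← support_sum_monomial_coeff r]
    rw [map_sum]
    exact Finset.sum_congr rfl fun d _ => chi_monomial d _
  have hc : coeff (mk2 (3 * d₀ 0 + d₀ 2) (3 * d₀ 1 + d₀ 2)) (chiAux r) = coeff d₀ r := by
    rw [hr, coeff_sum, Finset.sum_eq_single_of_mem d₀ hd₀]
    · rw [coeff_monomial, if_pos rfl]
    · intro d hd hne'
      rw [coeff_monomial, if_neg]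
      intro heq
      apply hne'
      have h1 := DFunLike.congr_fun heq (0 : Fin 2)
      have h2 := DFunLike.congr_fun heq (1 : Fin 2)
      simp [mk2, Finsupp.single_apply] at h1 h2
      have hk := hs d hd
      have hk0 := hs d₀ hd₀
      ext i
      fin_cases i
      · show d 0 = d₀ 0; omega
      · show d 1 = d₀ 1; omega
      · show d 2 = d₀ 2; omega
  rw [h0] at hc
  simp only [coeff_zero] at hc
  exact (mem_support_iff.mp hd₀) hc.symm

lemma red' (i j t s : ℕ) (c : ℂ) :
    (monomial (mk3 i j (3 * t + s)) c : MvPolynomial (Fin 3) ℂ)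
        - monomial (mk3 (i + t) (j + t) s) c
      ∈ Ideal.span {(X 2 : MvPolynomial (Fin 3) ℂ) ^ 3 - X 0 * X 1} := by
  rw [Ideal.mem_span_singleton]
  obtain ⟨e, he⟩ := sub_dvd_pow_sub_pow ((X 2 : MvPolynomial (Fin 3) ℂ) ^ 3) (X 0 * X 1) t
  refine ⟨(C c * X 0 ^ i * X 1 ^ j * X 2 ^ s) * e, ?_⟩
  rw [mono3, mono3]
  linear_combination (C c * X 0 ^ i * X 1 ^ j * X 2 ^ s) * he

lemma red (i j k : ℕ) (c : ℂ) :
    (monomial (mk3 i j k) c : MvPolynomial (Fin 3) ℂ)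
        - monomial (mk3 (i + k / 3) (j + k / 3) (k % 3)) c
      ∈ Ideal.span {(X 2 : MvPolynomial (Fin 3) ℂ) ^ 3 - X 0 * X 1} := by
  have h := red' i j (k / 3) (k % 3) c
  rwa [Nat.div_add_mod] at h

/-- The kernel of `φ` is exactly the principal ideal `(h³ − a·b)`, so `φ` induces
an injection `ℂ[S] = ℂ[a,b,h]/(h³ − ab) ↪ R`. -/
theorem ker_phi_eq_span :
    RingHom.ker phi = Ideal.span {(X 2 : MvPolynomial (Fin 3) ℂ) ^ 3 - X 0 * X 1} := by
  have hphi : phi = (Ideal.Quotient.mkₐ ℂ Irel).comp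
      (aeval ![X 0 * X 1 * X 2, X 3 * X 4 * X 5, X 0 * X 3]) := by
    rw [comp_aeval]
    unfold phi
    congr 1
    funext i
    fin_cases i <;> simp [Ideal.Quotient.mkₐ_eq_mk]
  apply le_antisymm
  · intro p hp
    rw [RingHom.mem_ker] at hp
    have hmem : (aeval ![X 0 * X 1 * X 2, X 3 * X 4 * X 5, X 0 * X 3] p :
        MvPolynomial (Fin 6) ℂ) ∈ Irel := by
      rw [hphi] at hp
      rw [← Ideal.Quotient.eq_zero_iff_mem, ← Ideal.Quotient.mkₐ_eq_mk ℂ]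
      exact hp
    set Psi : MvPolynomial (Fin 6) ℂ →ₐ[ℂ] MvPolynomial (Fin 2) ℂ :=
      aeval ![X 0, X 0, X 0, X 1, X 1, X 1] with hPsi
    have hv5 : (![X 0, X 0, X 0, X 1, X 1, X 1] : Fin 6 → MvPolynomial (Fin 2) ℂ) 5 = X 1 := rfl
    have hPsiI : ∀ q ∈ Irel, Psi q = 0 := by
      intro q hq
      rw [Irel, Ideal.mem_span_pair] at hq
      obtain ⟨c1, c2, hq⟩ := hq
      rw [← hq]
      simp [hPsi, Matrix.cons_val_succ, hv5]
    have hchi : chiAux p = 0 := by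
      have hcomp : chiAux = Psi.comp
          (aeval ![X 0 * X 1 * X 2, X 3 * X 4 * X 5, X 0 * X 3]) := by
        rw [comp_aeval, chiAux]
        congr 1
        funext i
        fin_cases i <;> (simp [hPsi, Matrix.cons_val_succ, hv5]; try ring)
      rw [hcomp, AlgHom.comp_apply]
      exact hPsiI _ hmem
    set r : MvPolynomial (Fin 3) ℂ :=
      ∑ d ∈ p.support,
        monomial (mk3 (d 0 + d 2 / 3) (d 1 + d 2 / 3) (d 2 % 3)) (coeff d p) with hr
    have hsub : p - r ∈ Ideal.span {(X 2 : MvPolynomial (Fin 3) ℂ) ^ 3 - X 0 * X 1} := by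
      have heq : p - r = ∑ d ∈ p.support,
          (monomial d (coeff d p)
            - monomial (mk3 (d 0 + d 2 / 3) (d 1 + d 2 / 3) (d 2 % 3)) (coeff d p)) := by
        rw [Finset.sum_sub_distrib, support_sum_monomial_coeff, ← hr]
      rw [heq]
      refine Ideal.sum_mem _ fun d _ => ?_
      have h := red (d 0) (d 1) (d 2) (coeff d p)
      rwa [eq_mk3] at h
    have hchig : chiAux ((X 2 : MvPolynomial (Fin 3) ℂ) ^ 3 - X 0 * X 1) = 0 := by
      simp [chiAux, mul_pow]
    have hchir : chiAux r = 0 := by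
      obtain ⟨e, he⟩ := Ideal.mem_span_singleton.mp hsub
      have h1 : chiAux (p - r) = 0 := by rw [he, map_mul, hchig, zero_mul]
      rw [map_sub, hchi, zero_sub, neg_eq_zero] at h1
      exact h1
    have hds : ∀ d ∈ r.support, d 2 < 3 := by
      intro d hd
      rw [mem_support_iff] at hd
      by_contra hlt
      apply hd
      rw [hr, coeff_sum]
      apply Finset.sum_eq_zero
      intro d' _
      rw [coeff_monomial, if_neg]
      intro heq
      apply hlt
      have h2 := DFunLike.congr_fun heq (2 : Fin 3)
      simp [mk3, Finsupp.single_apply] at h2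
      omega
    have hr0 := key_inj r hds hchir
    rw [hr0, sub_zero] at hsub
    exact hsub
  · rw [Ideal.span_le]
    intro x hx
    rw [Set.mem_singleton_iff] at hx
    subst hx
    rw [SetLike.mem_coe, RingHom.mem_ker, hphi, AlgHom.comp_apply,
      Ideal.Quotient.mkₐ_eq_mk, Ideal.Quotient.eq_zero_iff_mem]
    have hval : (aeval ![X 0 * X 1 * X 2, X 3 * X 4 * X 5, X 0 * X 3]
        ((X 2 : MvPolynomial (Fin 3) ℂ) ^ 3 - X 0 * X 1) : MvPolynomial (Fin 6) ℂ)
        = (X 0 * X 3) ^ 3 - (X 0 * X 1 * X 2) * (X 3 * X 4 * X 5) := by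
      simp
    rw [hval, Irel, Ideal.mem_span_pair]
    exact ⟨X 0 * X 3 * (X 0 * X 3 + X 1 * X 4), X 0 * X 3 * (X 1 * X 4), by ring⟩
end

section
/- The subspace R^T₀ of R, defined as the image in R of the ℂ-linear span of all monomials u₁^{a₁}u₂^{a₂}u₃^{a₃}v₁^{b₁}v₂^{b₂}v₃^{b₃} with a₁−b₁ = a₂−b₂ = a₃−b₃, equals the ℂ-subalgebra of R generated by the images of the three elements u₁u₂u₃, v₁v₂v₃ and u₁v₁. -/
open MvPolynomial

/-- The set of monomials `u₁^{a₁}u₂^{a₂}u₃^{a₃}v₁^{b₁}v₂^{b₂}v₃^{b₃}` of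
`T`-weight `0`, i.e. with `a₁−b₁ = a₂−b₂ = a₃−b₃`. -/
def wt0Monomials : Set (MvPolynomial (Fin 6) ℂ) :=
  {m | ∃ a1 a2 a3 b1 b2 b3 : ℕ,
    (a1 : ℤ) - b1 = (a2 : ℤ) - b2 ∧ (a2 : ℤ) - b2 = (a3 : ℤ) - b3 ∧
    m = X 0 ^ a1 * X 1 ^ a2 * X 2 ^ a3 * X 3 ^ b1 * X 4 ^ b2 * X 5 ^ b3}

lemma wt0_one_mem : (1 : MvPolynomial (Fin 6) ℂ) ∈ wt0Monomials := by
  refine ⟨0, 0, 0, 0, 0, 0, by norm_num, by norm_num, by simp⟩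

lemma wt0_mul_mem {p q : MvPolynomial (Fin 6) ℂ}
    (hp : p ∈ wt0Monomials) (hq : q ∈ wt0Monomials) : p * q ∈ wt0Monomials := by
  obtain ⟨a1, a2, a3, b1, b2, b3, h1, h2, rfl⟩ := hp
  obtain ⟨c1, c2, c3, d1, d2, d3, g1, g2, rfl⟩ := hq
  refine ⟨a1 + c1, a2 + c2, a3 + c3, b1 + d1, b2 + d2, b3 + d3, by push_cast; omega,
    by push_cast; omega, ?_⟩
  simp only [pow_add]; ring

/-- weight-0 monomials as a submonoid. -/
noncomputable def wt0Submonoid : Submonoid (MvPolynomial (Fin 6) ℂ) where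
  carrier := wt0Monomials
  one_mem' := wt0_one_mem
  mul_mem' := wt0_mul_mem

lemma mk_X1X4 : Ideal.Quotient.mk Irel (X 1 * X 4) = Ideal.Quotient.mk Irel (X 0 * X 3) := by
  rw [Ideal.Quotient.eq]
  have : X 1 * X 4 - X 0 * X 3 = -(X 0 * X 3 - X 1 * X 4 : MvPolynomial (Fin 6) ℂ) := by ring
  rw [this]
  exact neg_mem (Ideal.subset_span (Or.inl rfl))

lemma mk_X2X5 : Ideal.Quotient.mk Irel (X 2 * X 5) = Ideal.Quotient.mk Irel (X 0 * X 3) := by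
  rw [Ideal.Quotient.eq]
  have : X 2 * X 5 - X 0 * X 3 =
      -((X 0 * X 3 - X 1 * X 4) + (X 1 * X 4 - X 2 * X 5) : MvPolynomial (Fin 6) ℂ) := by ring
  rw [this]
  exact neg_mem (add_mem (Ideal.subset_span (Or.inl rfl)) (Ideal.subset_span (Or.inr rfl)))

lemma key_mem {m : MvPolynomial (Fin 6) ℂ} (hm : m ∈ wt0Monomials) :
    Ideal.Quotient.mk Irel m ∈ Algebra.adjoin ℂ
      {Ideal.Quotient.mk Irel (X 0 * X 1 * X 2),
       Ideal.Quotient.mk Irel (X 3 * X 4 * X 5),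
       Ideal.Quotient.mk Irel (X 0 * X 3)} := by
  obtain ⟨a1, a2, a3, b1, b2, b3, h1, h2, rfl⟩ := hm
  set mk := Ideal.Quotient.mk Irel
  have hx : mk (X 0 * X 1 * X 2) ∈ Algebra.adjoin ℂ
      {mk (X 0 * X 1 * X 2), mk (X 3 * X 4 * X 5), mk (X 0 * X 3)} :=
    Algebra.subset_adjoin (by simp)
  have hy : mk (X 3 * X 4 * X 5) ∈ Algebra.adjoin ℂ
      {mk (X 0 * X 1 * X 2), mk (X 3 * X 4 * X 5), mk (X 0 * X 3)} :=
    Algebra.subset_adjoin (by simp)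
  have ht : mk (X 0 * X 3) ∈ Algebra.adjoin ℂ
      {mk (X 0 * X 1 * X 2), mk (X 3 * X 4 * X 5), mk (X 0 * X 3)} :=
    Algebra.subset_adjoin (by simp)
  rcases le_or_gt b1 a1 with h | h
  · obtain ⟨k, hk⟩ : ∃ k, a1 = b1 + k := ⟨a1 - b1, by omega⟩
    have ha2 : a2 = b2 + k := by omega
    have ha3 : a3 = b3 + k := by omega
    subst hk ha2 ha3
    have hpoly : (X 0 ^ (b1 + k) * X 1 ^ (b2 + k) * X 2 ^ (b3 + k) * X 3 ^ b1 * X 4 ^ b2 *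
        X 5 ^ b3 : MvPolynomial (Fin 6) ℂ) =
        (X 0 * X 1 * X 2) ^ k * (X 0 * X 3) ^ b1 * (X 1 * X 4) ^ b2 * (X 2 * X 5) ^ b3 := by
      simp only [pow_add, mul_pow]; ring
    have heq : mk ((X 0 * X 1 * X 2) ^ k * (X 0 * X 3) ^ b1 * (X 1 * X 4) ^ b2 *
        (X 2 * X 5) ^ b3) =
        mk (X 0 * X 1 * X 2) ^ k * mk (X 0 * X 3) ^ b1 * mk (X 0 * X 3) ^ b2 *
        mk (X 0 * X 3) ^ b3 := by
      rw [map_mul, map_mul, map_mul, map_pow, map_pow, map_pow, map_pow, mk_X1X4, mk_X2X5]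
    rw [hpoly, heq]
    exact mul_mem (mul_mem (mul_mem (pow_mem hx k) (pow_mem ht b1)) (pow_mem ht b2))
      (pow_mem ht b3)
  · obtain ⟨k, hk⟩ : ∃ k, b1 = a1 + k := ⟨b1 - a1, by omega⟩
    have hb2 : b2 = a2 + k := by omega
    have hb3 : b3 = a3 + k := by omega
    subst hk hb2 hb3
    have hpoly : (X 0 ^ a1 * X 1 ^ a2 * X 2 ^ a3 * X 3 ^ (a1 + k) * X 4 ^ (a2 + k) *
        X 5 ^ (a3 + k) : MvPolynomial (Fin 6) ℂ) =
        (X 3 * X 4 * X 5) ^ k * (X 0 * X 3) ^ a1 * (X 1 * X 4) ^ a2 * (X 2 * X 5) ^ a3 := by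
      simp only [pow_add, mul_pow]; ring
    have heq : mk ((X 3 * X 4 * X 5) ^ k * (X 0 * X 3) ^ a1 * (X 1 * X 4) ^ a2 *
        (X 2 * X 5) ^ a3) =
        mk (X 3 * X 4 * X 5) ^ k * mk (X 0 * X 3) ^ a1 * mk (X 0 * X 3) ^ a2 *
        mk (X 0 * X 3) ^ a3 := by
      rw [map_mul, map_mul, map_mul, map_pow, map_pow, map_pow, map_pow, mk_X1X4, mk_X2X5]
    rw [hpoly, heq]
    exact mul_mem (mul_mem (mul_mem (pow_mem hy k) (pow_mem ht a1)) (pow_mem ht a2))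
      (pow_mem ht a3)

/-- `R^T₀`, the image in `R = P/I` of the ℂ-span of the weight-0 monomials, equals
the ℂ-subalgebra of `R` generated by the images of `u₁u₂u₃`, `v₁v₂v₃`, `u₁v₁`. -/
theorem wt0_image_eq_adjoin :
    Submodule.map (Ideal.Quotient.mkₐ ℂ Irel).toLinearMap
        (Submodule.span ℂ wt0Monomials) =
      Subalgebra.toSubmodule (Algebra.adjoin ℂ
        {Ideal.Quotient.mk Irel (X 0 * X 1 * X 2),
         Ideal.Quotient.mk Irel (X 3 * X 4 * X 5),
         Ideal.Quotient.mk Irel (X 0 * X 3)}) := by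
  have hspan : Submodule.span ℂ wt0Monomials =
      Subalgebra.toSubmodule (Algebra.adjoin ℂ wt0Monomials) := by
    rw [Algebra.adjoin_eq_span]
    congr 1
    exact (Submonoid.closure_eq wt0Submonoid).symm ▸ rfl
  rw [hspan]
  have hmap : Submodule.map (Ideal.Quotient.mkₐ ℂ Irel).toLinearMap
      (Subalgebra.toSubmodule (Algebra.adjoin ℂ wt0Monomials)) =
      Subalgebra.toSubmodule ((Algebra.adjoin ℂ wt0Monomials).map (Ideal.Quotient.mkₐ ℂ Irel)) := by
    ext x
    simp [Submodule.mem_map, Subalgebra.mem_map]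
  rw [hmap, AlgHom.map_adjoin]
  congr 1
  apply le_antisymm
  · rw [Algebra.adjoin_le_iff]
    rintro x ⟨m, hm, rfl⟩
    exact key_mem hm
  · rw [Algebra.adjoin_le_iff]
    rintro x hx
    simp only [Set.mem_insert_iff, Set.mem_singleton_iff] at hx
    rcases hx with rfl | rfl | rfl
    · exact Algebra.subset_adjoin ⟨X 0 * X 1 * X 2,
        ⟨1, 1, 1, 0, 0, 0, by norm_num, by norm_num, by ring⟩, rfl⟩
    · exact Algebra.subset_adjoin ⟨X 3 * X 4 * X 5,
        ⟨0, 0, 0, 1, 1, 1, by norm_num, by norm_num, by ring⟩, rfl⟩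
    · exact Algebra.subset_adjoin ⟨X 0 * X 3,
        ⟨1, 0, 0, 1, 0, 0, by norm_num, by norm_num, by ring⟩, rfl⟩
end

section
/- Assume B is a nondegenerate symmetric invariant bilinear form on g. Then the bilinear form ω on the eigenspace g₁ defined by ω(a,b) = B(f, [a,b]) is alternating (ω(a,a) = 0 for all a ∈ g₁) and nondegenerate: if a ∈ g₁ satisfies B(f,[a,b]) = 0 for all b ∈ g₁, then a = 0. (This is the symplectic form on g₁ used to choose the Lagrangian subspace l in the construction of W-algebras.) -/
/-!
Write `x = ⁅f, a⁆`. Invariance gives `B f ⁅a, b⁆ = B x b`, and since `x` has `ad h`-weight `-1`,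
`B x` also kills the range of `ad h - 1`. The heart of the matter is that `h` acts semisimply on
any finite-dimensional `sl₂`-module, so `g = ker (ad h - 1) ⊕ range (ad h - 1)`; hence `B x = 0`,
so `x = 0` by nondegeneracy, and a vector of weight `1` killed by `f` vanishes by `sl₂` theory.

Semisimplicity of `h`: climbing with `e` reduces a Jordan chain `⁅h, v⁆ = μ • v + u` to one with
`⁅e, u⁆ = 0`. Projecting `v` to a generalized eigenspace of the Casimir, one may moreover assume
`⁅e, v⁆ = 0`, and then the `f`-string through `v` is incompatible with finite dimensionality.
-/

open LieModule Set

namespace Module.End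

section CommRing

variable {R V : Type*} [CommRing R] [AddCommGroup V] [Module R V]

lemma mapsTo_maxGenEigenspace_of_mul_sub_mul_eq_smul {T A : End R V} {c : R}
    (hA : T * A - A * T = c • A) (μ : R) :
    MapsTo A (T.maxGenEigenspace μ) (T.maxGenEigenspace (μ + c)) := by
  have hsemiconj : SemiconjBy A (T - μ • 1) (T - (μ + c) • 1) := by
    rw [sub_eq_iff_eq_add] at hA
    rw [SemiconjBy, mul_sub, sub_mul, mul_smul_comm, smul_mul_assoc, mul_one, one_mul, hA,
      add_smul]
    abel
  intro x hx
  obtain ⟨k, hk⟩ := (T.mem_maxGenEigenspace μ x).mp hx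
  refine (T.mem_maxGenEigenspace _ _).mpr ⟨k, ?_⟩
  rw [← mul_apply, ← (hsemiconj.pow_right k).eq, mul_apply, hk, map_zero]

lemma exists_mem_maxGenEigenspace_apply_eq_of_commute [IsNoetherian R V] [IsArtinian R V]
    {C T : End R V} (hCT : Commute C T) {χ : R} {u v : V} (hu : u ∈ C.maxGenEigenspace χ)
    (hv : T v = u) : ∃ w ∈ C.maxGenEigenspace χ, T w = u := by
  have hcompl := LinearMap.isCompl_iSup_ker_pow_iInf_range_pow (C - χ • 1)
  simp_rw [← genEigenspace_nat, iSup_genEigenspace_eq] at hcompl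
  have hrange : MapsTo T (⨅ n, LinearMap.range ((C - χ • 1) ^ n) : Submodule R V)
      (⨅ n, LinearMap.range ((C - χ • 1) ^ n) : Submodule R V) := by
    intro y hy
    simp only [SetLike.mem_coe, Submodule.mem_iInf, LinearMap.mem_range] at hy ⊢
    intro n
    obtain ⟨x, rfl⟩ := hy n
    have hcomm : Commute ((C - χ • 1) ^ n) T :=
      (hCT.sub_left ((Commute.one_left T).smul_left χ)).pow_left n
    exact ⟨T x, by rw [← mul_apply, hcomm.eq, mul_apply]⟩
  obtain ⟨w, hw, w', hw', rfl⟩ :=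
    Submodule.mem_sup.mp (hcompl.sup_eq_top ▸ Submodule.mem_top (x := v))
  have hTw' : T w' = u - T w := by rw [← hv, map_add]; abel
  have hTw'_zero : T w' = 0 := Submodule.disjoint_def.mp hcompl.disjoint _
    (hTw' ▸ Submodule.sub_mem _ hu (mapsTo_maxGenEigenspace_of_comm hCT χ hw)) (hrange hw')
  exact ⟨w, hw, (sub_eq_zero.mp (hTw'_zero ▸ hTw').symm).symm⟩

end CommRing

lemma exists_pow_apply_eq_zero_of_mul_sub_mul_eq_smul {K V : Type*} [Field K] [CharZero K]
    [AddCommGroup V] [Module K V] [FiniteDimensional K V] {T A : End K V} {c : K} (hc : c ≠ 0)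
    (hA : T * A - A * T = c • A) {μ : K} {x : V} (hx : x ∈ T.maxGenEigenspace μ) :
    ∃ k, (A ^ k) x = 0 := by
  by_contra! hne
  have hmem : ∀ k : ℕ, (A ^ k) x ∈ T.maxGenEigenspace (μ + k * c) := by
    intro k
    induction k with
    | zero => simpa using hx
    | succ k ih =>
      rw [pow_succ', mul_apply, Nat.cast_succ, add_one_mul, ← add_assoc]
      exact mapsTo_maxGenEigenspace_of_mul_sub_mul_eq_smul hA _ ih
  have hinj : Function.Injective fun k : ℕ ↦ μ + k * c := fun a b hab ↦ by
    simpa [hc] using hab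
  have := (iSupIndep.linearIndependent _ (T.independent_maxGenEigenspace.comp hinj) hmem hne).finite
  exact not_finite ℕ

end Module.End

lemma LieModule.toEnd_pow_succ_apply {K L M : Type*} [CommRing K] [LieRing L] [LieAlgebra K L]
    [AddCommGroup M] [Module K M] [LieRingModule L M] [LieModule K L M] (x : L) (n : ℕ) (m : M) :
    (toEnd K L M x ^ (n + 1)) m = ⁅x, (toEnd K L M x ^ n) m⁆ := by
  rw [pow_succ', Module.End.mul_apply, toEnd_apply_apply]

namespace IsSl2Triple

section CommRing

variable {K L M : Type*} [CommRing K] [LieRing L] [LieAlgebra K L]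
  [AddCommGroup M] [Module K M] [LieRingModule L M] [LieModule K L M] {h e f : L}

section Relations

variable (t : IsSl2Triple h e f)
include t

lemma lie_h_lie_e (m : M) : ⁅h, ⁅e, m⁆⁆ = ⁅e, ⁅h, m⁆⁆ + 2 • ⁅e, m⁆ := by
  rw [leibniz_lie, t.lie_h_e_nsmul, nsmul_lie, add_comm]

lemma lie_h_lie_f (m : M) : ⁅h, ⁅f, m⁆⁆ = ⁅f, ⁅h, m⁆⁆ - 2 • ⁅f, m⁆ := by
  rw [leibniz_lie, t.lie_h_f_nsmul, neg_lie, nsmul_lie, add_comm, sub_eq_add_neg]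

lemma lie_e_lie_f (m : M) : ⁅e, ⁅f, m⁆⁆ = ⁅f, ⁅e, m⁆⁆ + ⁅h, m⁆ := by
  rw [leibniz_lie, t.lie_e_f, add_comm]

variable (K M)

lemma toEnd_h_mul_sub_mul_toEnd_e :
    toEnd K L M h * toEnd K L M e - toEnd K L M e * toEnd K L M h = (2 : K) • toEnd K L M e := by
  ext m
  simp only [LinearMap.sub_apply, Module.End.mul_apply, LinearMap.smul_apply, toEnd_apply_apply,
    t.lie_h_lie_e, add_sub_cancel_left, ofNat_smul_eq_nsmul]

lemma toEnd_h_mul_sub_mul_toEnd_f :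
    toEnd K L M h * toEnd K L M f - toEnd K L M f * toEnd K L M h = (-2 : K) • toEnd K L M f := by
  ext m
  simp only [neg_smul, LinearMap.sub_apply, Module.End.mul_apply, LinearMap.neg_apply,
    LinearMap.smul_apply, toEnd_apply_apply, t.lie_h_lie_f, sub_sub_cancel_left,
    ofNat_smul_eq_nsmul]

end Relations

variable (K M) in
/-- Twice the image of the Casimir element `e f + f e + h² / 2` of `sl₂`. -/
def casimir (h e f : L) : Module.End K M :=
  toEnd K L M h * toEnd K L M h + (2 : K) • toEnd K L M h +
    (4 : K) • (toEnd K L M f * toEnd K L M e)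

lemma casimir_apply (m : M) :
    casimir K M h e f m = ⁅h, ⁅h, m⁆⁆ + (2 : K) • ⁅h, m⁆ + (4 : K) • ⁅f, ⁅e, m⁆⁆ := by
  simp [casimir]

lemma casimir_apply_of_lie_e_eq_zero {ν : K} {m : M} (he : ⁅e, m⁆ = 0) (hh : ⁅h, m⁆ = ν • m) :
    casimir K M h e f m = (ν * (ν + 2)) • m := by
  rw [casimir_apply, he, hh, lie_smul, hh, lie_zero, smul_zero, add_zero]
  module

variable (t : IsSl2Triple h e f)
include t

lemma commute_casimir_toEnd_h : Commute (casimir K M h e f) (toEnd K L M h) := by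
  refine LinearMap.ext fun m ↦ ?_
  simp only [Module.End.mul_apply, toEnd_apply_apply, casimir_apply, lie_add, lie_smul, lie_nsmul,
    t.lie_h_lie_f, t.lie_h_lie_e]
  module

lemma commute_casimir_toEnd_e : Commute (casimir K M h e f) (toEnd K L M e) := by
  refine LinearMap.ext fun m ↦ ?_
  simp only [Module.End.mul_apply, toEnd_apply_apply, casimir_apply, lie_add, lie_smul, lie_nsmul,
    t.lie_e_lie_f, t.lie_h_lie_e]
  module

variable {μ : K} {u w : M}

lemma lie_h_pow_toEnd_f_of_lie_h_eq_smul_add (hw : ⁅h, w⁆ = μ • w + u) (j : ℕ) :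
    ⁅h, (toEnd K L M f ^ j) w⁆ = (μ - 2 * j) • (toEnd K L M f ^ j) w + (toEnd K L M f ^ j) u := by
  induction j with
  | zero => simpa using hw
  | succ j ih =>
    rw [toEnd_pow_succ_apply, t.lie_h_lie_f, ih, lie_add, lie_smul, ← toEnd_pow_succ_apply,
      ← toEnd_pow_succ_apply]
    push_cast
    module

lemma lie_e_pow_succ_toEnd_f_of_lie_h_eq_smul_add (hwe : ⁅e, w⁆ = 0) (hw : ⁅h, w⁆ = μ • w + u)
    (j : ℕ) : ⁅e, (toEnd K L M f ^ (j + 1)) w⁆ =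
      ((j + 1) * (μ - j)) • (toEnd K L M f ^ j) w + ((j : K) + 1) • (toEnd K L M f ^ j) u := by
  induction j with
  | zero => simp [t.lie_e_lie_f, hwe, hw]
  | succ j ih =>
    rw [toEnd_pow_succ_apply, t.lie_e_lie_f, ih, t.lie_h_pow_toEnd_f_of_lie_h_eq_smul_add hw,
      lie_add, lie_smul, lie_smul, ← toEnd_pow_succ_apply, ← toEnd_pow_succ_apply]
    push_cast
    module

end CommRing

variable {K L M : Type*} [Field K] [CharZero K] [LieRing L] [LieAlgebra K L]
  [AddCommGroup M] [Module K M] [LieRingModule L M] [LieModule K L M] [FiniteDimensional K M]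
  {h e f : L} (t : IsSl2Triple h e f)
include t

lemma exists_pow_toEnd_e_eq_zero {μ : K} {m : M} (hm : m ∈ (toEnd K L M h).maxGenEigenspace μ) :
    ∃ k, (toEnd K L M e ^ k) m = 0 :=
  Module.End.exists_pow_apply_eq_zero_of_mul_sub_mul_eq_smul two_ne_zero
    (t.toEnd_h_mul_sub_mul_toEnd_e K M) hm

lemma exists_pow_toEnd_f_eq_zero {μ : K} {m : M} (hm : m ∈ (toEnd K L M h).maxGenEigenspace μ) :
    ∃ k, (toEnd K L M f ^ k) m = 0 :=
  Module.End.exists_pow_apply_eq_zero_of_mul_sub_mul_eq_smul (neg_ne_zero.mpr two_ne_zero)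
    (t.toEnd_h_mul_sub_mul_toEnd_f K M) hm

lemma eq_zero_of_mem_maxGenEigenspace_casimir {χ ν : K} {z : M} (hz : ⁅h, z⁆ = ν • z)
    (hχ : ∀ j : ℕ, (ν + 2 * j) * (ν + 2 * j + 2) ≠ χ)
    (hC : z ∈ (casimir K M h e f).maxGenEigenspace χ) : z = 0 := by
  obtain ⟨k, hk⟩ := t.exists_pow_toEnd_e_eq_zero
    (Module.End.eigenspace_le_maxGenEigenspace (Module.End.mem_eigenspace_iff.mpr hz))
  induction k generalizing ν z with
  | zero => simpa using hk
  | succ k ih =>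
    have hez : ⁅e, z⁆ = 0 := by
      refine ih (ν := ν + 2) (by rw [t.lie_h_lie_e, hz, lie_smul]; module) (fun j ↦ ?_)
        (Module.End.mapsTo_maxGenEigenspace_of_comm t.commute_casimir_toEnd_e χ hC) ?_
      · convert hχ (j + 1) using 2 <;> push_cast <;> ring
      · rwa [pow_succ, Module.End.mul_apply, toEnd_apply_apply] at hk
    have hCz : z ∈ (casimir K M h e f).eigenspace (ν * (ν + 2)) :=
      Module.End.mem_eigenspace_iff.mpr (casimir_apply_of_lie_e_eq_zero hez hz)
    exact Submodule.disjoint_def.mp ((casimir K M h e f).disjoint_genEigenspace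
      (by simpa using hχ 0) 1 ⊤) z hCz hC

namespace HasPrimitiveVectorWith

variable {t} {u : M} {μ : K} (P : t.HasPrimitiveVectorWith u μ)
include P

lemma lie_h_ne_smul_add_of_lie_e_eq_zero {w : M} (hwe : ⁅e, w⁆ = 0) : ⁅h, w⁆ ≠ μ • w + u := by
  intro hw
  obtain ⟨n, rfl⟩ := P.exists_nat
  have hw_ne : w ≠ 0 := by
    rintro rfl
    exact P.ne_zero (by simpa [eq_comm] using hw)
  have hw_gen : w ∈ (toEnd K L M h).maxGenEigenspace (n : K) := by
    refine ((toEnd K L M h).mem_maxGenEigenspace _ _).mpr ⟨2, ?_⟩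
    simp [pow_two, hw, P.lie_h]
  obtain ⟨m, hm, hm'⟩ := Nat.exists_not_and_succ_of_not_zero_of_exists
    (p := fun j ↦ (toEnd K L M f ^ j) w = 0) (by simpa using hw_ne)
    (t.exists_pow_toEnd_f_eq_zero hw_gen)
  have hkey : ((n : K) - m) • (toEnd K L M f ^ m) w + (toEnd K L M f ^ m) u = 0 := by
    have := t.lie_e_pow_succ_toEnd_f_of_lie_h_eq_smul_add hwe hw m
    rw [hm', lie_zero, mul_smul, ← smul_add] at this
    exact (smul_eq_zero.mp this.symm).resolve_left (Nat.cast_add_one_ne_zero m)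
  have hu : ((n : K) - m) • (toEnd K L M f ^ m) u = 0 := by
    have : ((n : K) - m) • (toEnd K L M f ^ m) u =
        ⁅h, ((n : K) - m) • (toEnd K L M f ^ m) w + (toEnd K L M f ^ m) u⁆ -
          ((n : K) - 2 * m) • (((n : K) - m) • (toEnd K L M f ^ m) w + (toEnd K L M f ^ m) u) := by
      rw [lie_add, lie_smul, t.lie_h_pow_toEnd_f_of_lie_h_eq_smul_add hw, P.lie_h_pow_toEnd_f]
      module
    rwa [hkey, lie_zero, smul_zero, sub_zero] at this
  rcases eq_or_ne (n : K) m with hnm | hnm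
  · rw [hnm, sub_self, zero_smul, zero_add] at hkey
    exact P.pow_toEnd_f_ne_zero_of_eq_nat rfl (Nat.cast_injective hnm).symm.le hkey
  · rw [smul_eq_zero, or_iff_right (sub_ne_zero.mpr hnm)] at hu
    rw [hu, add_zero, smul_eq_zero, or_iff_right (sub_ne_zero.mpr hnm)] at hkey
    exact hm hkey

lemma lie_h_ne_smul_add (v : M) : ⁅h, v⁆ ≠ μ • v + u := by
  intro hv
  obtain ⟨n, rfl⟩ := P.exists_nat
  have hCu : u ∈ (casimir K M h e f).maxGenEigenspace ((n : K) * (n + 2)) :=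
    Module.End.eigenspace_le_maxGenEigenspace <| Module.End.mem_eigenspace_iff.mpr <|
      casimir_apply_of_lie_e_eq_zero P.lie_e P.lie_h
  have hcomm : Commute (casimir K M h e f) (toEnd K L M h - (n : K) • 1) :=
    t.commute_casimir_toEnd_h.sub_right ((Commute.one_right _).smul_right _)
  have hv' : (toEnd K L M h - (n : K) • 1) v = u := by simp [hv]
  obtain ⟨w, hwC, hw⟩ := Module.End.exists_mem_maxGenEigenspace_apply_eq_of_commute hcomm hCu hv'
  have hwh : ⁅h, w⁆ = (n : K) • w + u := by simpa [sub_eq_iff_eq_add'] using hw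
  refine P.lie_h_ne_smul_add_of_lie_e_eq_zero
    (t.eq_zero_of_mem_maxGenEigenspace_casimir (ν := (n : K) + 2) ?_ (fun j ↦ ?_)
      (Module.End.mapsTo_maxGenEigenspace_of_comm t.commute_casimir_toEnd_e _ hwC)) hwh
  · rw [t.lie_h_lie_e, hwh, lie_add, lie_smul, P.lie_e]
    module
  · norm_cast
    exact (Nat.mul_lt_mul'' (by omega) (by omega)).ne'

end HasPrimitiveVectorWith

lemma eq_zero_of_lie_h_eq_smul_add {μ : K} {u v : M} (hu : ⁅h, u⁆ = μ • u)
    (hv : ⁅h, v⁆ = μ • v + u) : u = 0 := by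
  obtain ⟨k, hk⟩ := t.exists_pow_toEnd_e_eq_zero
    (Module.End.eigenspace_le_maxGenEigenspace (Module.End.mem_eigenspace_iff.mpr hu))
  induction k generalizing μ u v with
  | zero => simpa using hk
  | succ k ih =>
    have hue : ⁅e, u⁆ = 0 := by
      refine ih (μ := μ + 2) (v := ⁅e, v⁆) ?_ ?_ ?_
      · rw [t.lie_h_lie_e, hu, lie_smul]
        module
      · rw [t.lie_h_lie_e, hv, lie_add, lie_smul]
        module
      · rwa [pow_succ, Module.End.mul_apply, toEnd_apply_apply] at hk
    by_contra hu0
    exact (⟨hu0, hu, hue⟩ : t.HasPrimitiveVectorWith u μ).lie_h_ne_smul_add v hv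

lemma isCompl_ker_range_toEnd_h_sub_smul (μ : K) :
    IsCompl (LinearMap.ker (toEnd K L M h - μ • 1)) (LinearMap.range (toEnd K L M h - μ • 1)) := by
  refine (Submodule.isCompl_iff_disjoint (K := K) _ _ ?_).mpr (Submodule.disjoint_def.mpr ?_)
  · rw [add_comm, (toEnd K L M h - μ • 1).finrank_range_add_finrank_ker]
  · rintro u hu ⟨v, rfl⟩
    refine t.eq_zero_of_lie_h_eq_smul_add (μ := μ) (v := v) ?_ ?_
    · simpa [sub_eq_zero] using hu
    · simp

lemma eq_zero_of_lie_f_eq_zero {μ : K} {m : M} (hh : ⁅h, m⁆ = μ • m) (hf : ⁅f, m⁆ = 0)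
    (hμ : ∀ n : ℕ, μ ≠ -n) : m = 0 := by
  by_contra hm
  obtain ⟨n, hn⟩ :=
    (⟨hm, by rw [neg_lie, hh, neg_smul], hf⟩ : t.symm.HasPrimitiveVectorWith m (-μ)).exists_nat
  exact hμ n (by rw [← hn, neg_neg])

end IsSl2Triple

theorem symplectic_form_on_g1_general
    (g : Type*) [LieRing g] [LieAlgebra ℂ g] [FiniteDimensional ℂ g]
    (e h f : g) (hhe : ⁅h, e⁆ = (2 : ℂ) • e) (hhf : ⁅h, f⁆ = (-2 : ℂ) • f)
    (hef : ⁅e, f⁆ = h)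
    (B : g →ₗ[ℂ] g →ₗ[ℂ] ℂ)
    (hinv : ∀ x y z : g, B ⁅x, y⁆ z = B x ⁅y, z⁆)
    (hnondeg : ∀ x : g, (∀ y : g, B x y = 0) → x = 0) :
    (∀ a : g, ⁅h, a⁆ = (1 : ℂ) • a → B f ⁅a, a⁆ = 0) ∧
    (∀ a : g, ⁅h, a⁆ = (1 : ℂ) • a →
      (∀ b : g, ⁅h, b⁆ = (1 : ℂ) • b → B f ⁅a, b⁆ = 0) → a = 0) := by
  refine ⟨fun a _ ↦ by rw [lie_self, map_zero], fun a ha hω ↦ ?_⟩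
  rcases eq_or_ne h 0 with rfl | hh
  · simpa [eq_comm] using ha
  have t : IsSl2Triple h e f := ⟨hh, hef, by rw [hhe, two_smul, two_smul], by
    rw [hhf, neg_smul, two_smul, two_smul]⟩
  have hfa : ⁅⁅f, a⁆, h⁆ = ⁅f, a⁆ := by
    rw [← lie_skew, t.lie_h_lie_f, ha, one_smul, two_smul, neg_sub, add_sub_cancel_left]
  have hB : ∀ y, B ⁅f, a⁆ y = 0 := by
    intro y
    have hdecomp := (t.isCompl_ker_range_toEnd_h_sub_smul (M := g) (1 : ℂ)).sup_eq_top
    obtain ⟨b, hb, _, ⟨y, rfl⟩, rfl⟩ := Submodule.mem_sup.mp (hdecomp ▸ Submodule.mem_top (x := y))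
    have hb : ⁅h, b⁆ = (1 : ℂ) • b := by simpa [sub_eq_zero] using hb
    rw [map_add, hinv, hω b hb, LinearMap.sub_apply, toEnd_apply_apply, LinearMap.smul_apply,
      Module.End.one_apply, one_smul, map_sub, ← hinv, hfa, sub_self, zero_add]
  exact t.eq_zero_of_lie_f_eq_zero (M := g) ha (hnondeg _ hB)
    (fun n hn ↦ Nat.cast_add_one_ne_zero (R := ℂ) n (by linear_combination hn))

/-- Let `e, h, f` be an sl₂-triple in a finite-dimensional complex Lie algebra `g`
and let `B` be a nondegenerate symmetric invariant bilinear form on `g`.  Then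
the bilinear form `ω(a,b) = B(f,[a,b])` on the eigenspace
`g₁ = {x : [h,x] = x}` is alternating and nondegenerate. -/
theorem symplectic_form_on_g1
    (g : Type*) [LieRing g] [LieAlgebra ℂ g] [FiniteDimensional ℂ g]
    (e h f : g) (hhe : ⁅h, e⁆ = (2 : ℂ) • e) (hhf : ⁅h, f⁆ = (-2 : ℂ) • f)
    (hef : ⁅e, f⁆ = h)
    (B : g →ₗ[ℂ] g →ₗ[ℂ] ℂ)
    (hsymm : ∀ x y : g, B x y = B y x)
    (hinv : ∀ x y z : g, B ⁅x, y⁆ z = B x ⁅y, z⁆)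
    (hnondeg : ∀ x : g, (∀ y : g, B x y = 0) → x = 0) :
    (∀ a : g, ⁅h, a⁆ = (1 : ℂ) • a → B f ⁅a, a⁆ = 0) ∧
    (∀ a : g, ⁅h, a⁆ = (1 : ℂ) • a →
      (∀ b : g, ⁅h, b⁆ = (1 : ℂ) • b → B f ⁅a, b⁆ = 0) → a = 0) :=
  symplectic_form_on_g1_general g e h f hhe hhf hef B hinv hnondeg
end

section
/- Let l ⊆ g₁ be a subspace which is isotropic for the form ω(a,b) = B(f,[a,b]), i.e. B(f,[a,b]) = 0 for all a, b ∈ l, and set 𝔪 = l + Σ_{i ≥ 2} g_i (the sum over the eigenspaces of ad h with integer eigenvalue at least 2). Then: (i) 𝔪 is a Lie subalgebra of g; (ii) 𝔪 is a nilpotent Lie algebra; (iii) χ := B(f, −) is a character of 𝔪, i.e. B(f,[x,y]) = 0 for all x, y ∈ 𝔪. -/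
section Aux

variable {g : Type*} [LieRing g] [LieAlgebra ℂ g] (h : g)

local notation "V" => fun c => Module.End.eigenspace (LieAlgebra.ad ℂ g h) c

/-- Bracket of eigenvectors of `ad h`. -/
lemma lie_mem_eigen {a b : ℂ} {x y : g}
    (hx : x ∈ Module.End.eigenspace (LieAlgebra.ad ℂ g h) a)
    (hy : y ∈ Module.End.eigenspace (LieAlgebra.ad ℂ g h) b) :
    ⁅x, y⁆ ∈ Module.End.eigenspace (LieAlgebra.ad ℂ g h) (a + b) := by
  rw [Module.End.mem_eigenspace_iff, LieAlgebra.ad_apply] at *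
  rw [leibniz_lie, hx, hy, smul_lie, lie_smul, add_smul]

/-- `S k = ⨆_{i ≥ k} g_i`. -/
def eigS (k : ℕ) : Submodule ℂ g :=
  ⨆ i : ℕ, ⨆ _ : k ≤ i, Module.End.eigenspace (LieAlgebra.ad ℂ g h) (i : ℂ)

lemma eigen_le_eigS {k i : ℕ} (hk : k ≤ i) :
    Module.End.eigenspace (LieAlgebra.ad ℂ g h) (i : ℂ) ≤ eigS h k :=
  le_iSup_of_le i (le_iSup_of_le hk le_rfl)

lemma eigS_anti {k k' : ℕ} (hk : k ≤ k') : eigS h k' ≤ eigS h k :=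
  iSup_le fun i => iSup_le fun hi => eigen_le_eigS h (hk.trans hi)

lemma mem_eigS_induction {k : ℕ} {x : g} (hx : x ∈ eigS h k) {C : g → Prop}
    (mem : ∀ i : ℕ, k ≤ i → ∀ z ∈ Module.End.eigenspace (LieAlgebra.ad ℂ g h) (i : ℂ), C z)
    (zero : C 0) (add : ∀ a b, C a → C b → C (a + b)) : C x := by
  have hx' : x ∈ ⨆ i : {i : ℕ // k ≤ i},
      Module.End.eigenspace (LieAlgebra.ad ℂ g h) ((i : ℕ) : ℂ) := by
    refine (iSup_le fun i => iSup_le fun hi => ?_ : eigS h k ≤ _) hx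
    exact le_iSup (fun j : {i : ℕ // k ≤ i} =>
      Module.End.eigenspace (LieAlgebra.ad ℂ g h) ((j : ℕ) : ℂ)) ⟨i, hi⟩
  exact Submodule.iSup_induction (x := x)
    (fun i : {i : ℕ // k ≤ i} => Module.End.eigenspace (LieAlgebra.ad ℂ g h) ((i : ℕ) : ℂ))
    hx' (fun i z hz => mem i i.2 z hz) zero add

lemma lie_eigS_mem {k k' : ℕ} {x y : g} (hx : x ∈ eigS h k) (hy : y ∈ eigS h k') :
    ⁅x, y⁆ ∈ eigS h (k + k') := by
  refine mem_eigS_induction h hx (C := fun x => ⁅x, y⁆ ∈ eigS h (k + k')) ?_ ?_ ?_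
  · intro i hki z hz
    refine mem_eigS_induction h hy (C := fun y => ⁅z, y⁆ ∈ eigS h (k + k')) ?_ ?_ ?_
    · intro j hkj w hw
      have h1 : ⁅z, w⁆ ∈ Module.End.eigenspace (LieAlgebra.ad ℂ g h) ((i + j : ℕ) : ℂ) := by
        have := lie_mem_eigen h hz hw
        rwa [← Nat.cast_add] at this
      exact eigen_le_eigS h (Nat.add_le_add hki hkj) h1
    · show ⁅z, (0:g)⁆ ∈ _; rw [lie_zero]; exact (eigS h (k + k')).zero_mem
    · intro a b ha hb; show ⁅z, a + b⁆ ∈ _; rw [lie_add]; exact (eigS h (k + k')).add_mem ha hb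
  · show ⁅(0:g), y⁆ ∈ _; rw [zero_lie]; exact (eigS h (k + k')).zero_mem
  · intro a b ha hb; show ⁅a + b, y⁆ ∈ _; rw [add_lie]; exact (eigS h (k + k')).add_mem ha hb

/-- In finite dimension, `S N = ⊥` for `N` large. -/
lemma eigS_eq_bot [FiniteDimensional ℂ g] : ∃ N : ℕ, eigS h N = ⊥ := by
  have hfin : Set.Finite ((LieAlgebra.ad ℂ g h).HasEigenvalue) :=
    Module.End.finite_hasEigenvalue _
  have hfin2 : Set.Finite {n : ℕ | (LieAlgebra.ad ℂ g h).HasEigenvalue (n : ℂ)} := by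
    refine Set.Finite.preimage ?_ hfin
    exact Function.Injective.injOn Nat.cast_injective
  obtain ⟨N, hN⟩ := hfin2.bddAbove
  refine ⟨N + 1, le_bot_iff.mp (iSup_le fun i => iSup_le fun hi => ?_)⟩
  by_contra hc
  have : (LieAlgebra.ad ℂ g h).HasEigenvalue (i : ℂ) := fun hb => hc (le_of_eq hb)
  have := hN this
  omega

end Aux

/-- The lower central series of a submodule `m` of a Lie algebra, computed inside
the ambient Lie algebra: `C⁰ = m`, `C^{k+1} = span{⁅a,b⁆ : a ∈ m, b ∈ Cᵏ}`.
A Lie subalgebra `m` is nilpotent iff some term of this series vanishes. -/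
def lowerCentral (g : Type*) [LieRing g] [LieAlgebra ℂ g]
    (m : Submodule ℂ g) : ℕ → Submodule ℂ g
  | 0 => m
  | (k + 1) => Submodule.span ℂ {z : g | ∃ a ∈ m, ∃ b ∈ lowerCentral g m k, z = ⁅a, b⁆}

/-- Let `e, h, f` be an sl₂-triple in a finite-dimensional complex Lie algebra `g`,
`B` a symmetric invariant bilinear form, `l ⊆ g₁` a subspace isotropic for
`ω(a,b) = B(f,[a,b])`, and `𝔪 = l + Σ_{i≥2} g_i`.  Then (i) `𝔪` is a Lie
subalgebra of `g`; (ii) `𝔪` is nilpotent; (iii) `χ = B(f,−)` is a character of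
`𝔪`, i.e. `B(f,[x,y]) = 0` for all `x, y ∈ 𝔪`. -/
theorem m_subalgebra_nilpotent_character
    (g : Type*) [LieRing g] [LieAlgebra ℂ g] [FiniteDimensional ℂ g]
    (e h f : g) (hhe : ⁅h, e⁆ = (2 : ℂ) • e) (hhf : ⁅h, f⁆ = (-2 : ℂ) • f)
    (hef : ⁅e, f⁆ = h)
    (B : g →ₗ[ℂ] g →ₗ[ℂ] ℂ)
    (hsymm : ∀ x y : g, B x y = B y x)
    (hinv : ∀ x y z : g, B ⁅x, y⁆ z = B x ⁅y, z⁆)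
    (l : Submodule ℂ g)
    (hl : l ≤ Module.End.eigenspace (LieAlgebra.ad ℂ g h) (1 : ℂ))
    (hiso : ∀ a ∈ l, ∀ b ∈ l, B f ⁅a, b⁆ = 0)
    (m : Submodule ℂ g)
    (hm : m = l ⊔ ⨆ i : ℕ, ⨆ _ : 2 ≤ i,
      Module.End.eigenspace (LieAlgebra.ad ℂ g h) (i : ℂ)) :
    (∀ x ∈ m, ∀ y ∈ m, ⁅x, y⁆ ∈ m) ∧
    (∃ n : ℕ, lowerCentral g m n = ⊥) ∧
    (∀ x ∈ m, ∀ y ∈ m, B f ⁅x, y⁆ = 0) := by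
  have hm' : m = l ⊔ eigS h 2 := hm
  -- l ≤ g₁ ≤ S 1
  have hl1 : l ≤ eigS h 1 := by
    intro x hx
    have : x ∈ Module.End.eigenspace (LieAlgebra.ad ℂ g h) ((1 : ℕ) : ℂ) := by
      rw [Nat.cast_one]; exact hl hx
    exact eigen_le_eigS h le_rfl this
  have hmS1 : m ≤ eigS h 1 := by
    rw [hm']; exact sup_le hl1 (eigS_anti h (by norm_num))
  have hS2m : eigS h 2 ≤ m := by rw [hm']; exact le_sup_right
  -- bracket of l-elements is in V 2 ≤ S 2
  have hll : ∀ a ∈ l, ∀ b ∈ l, ⁅a, b⁆ ∈ eigS h 2 := by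
    intro a ha b hb
    have : ⁅a, b⁆ ∈ Module.End.eigenspace (LieAlgebra.ad ℂ g h) ((2 : ℕ) : ℂ) := by
      have := lie_mem_eigen h (hl ha) (hl hb)
      norm_num at this ⊢
      exact this
    exact eigen_le_eigS h le_rfl this
  -- main bracket stability
  have key : ∀ x ∈ m, ∀ y ∈ m, ⁅x, y⁆ ∈ eigS h 2 := by
    intro x hx y hy
    rw [hm', Submodule.mem_sup] at hx hy
    obtain ⟨a, ha, b, hb, rfl⟩ := hx
    obtain ⟨a', ha', b', hb', rfl⟩ := hy
    have h1 : ⁅a, a'⁆ ∈ eigS h 2 := hll a ha a' ha'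
    have h2 : ⁅a, b'⁆ ∈ eigS h 2 :=
      eigS_anti h (by norm_num) (lie_eigS_mem h (hl1 ha) hb')
    have h3 : ⁅b, a'⁆ ∈ eigS h 2 :=
      eigS_anti h (by norm_num) (lie_eigS_mem h hb (hl1 ha'))
    have h4 : ⁅b, b'⁆ ∈ eigS h 2 :=
      eigS_anti h (by norm_num) (lie_eigS_mem h hb hb')
    rw [add_lie, lie_add, lie_add]
    exact Submodule.add_mem _ (Submodule.add_mem _ h1 h2) (Submodule.add_mem _ h3 h4)
  refine ⟨fun x hx y hy => hS2m (key x hx y hy), ?_, ?_⟩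
  · -- nilpotency
    have hlc : ∀ k, lowerCentral g m k ≤ eigS h (k + 1) := by
      intro k
      induction k with
      | zero => exact hmS1
      | succ k ih =>
          show Submodule.span ℂ _ ≤ _
          rw [Submodule.span_le]
          rintro z ⟨a, ha, b, hb, rfl⟩
          have := lie_eigS_mem h (hmS1 ha) (ih hb)
          exact eigS_anti h (le_of_eq (by omega)) this
    obtain ⟨N, hN⟩ := eigS_eq_bot (g := g) h
    exact ⟨N, le_bot_iff.mp ((hlc N).trans (hN ▸ eigS_anti h (Nat.le_succ N)))⟩
  · -- character
    have hBf : ∀ (c : ℂ), c ≠ 2 → ∀ z ∈ Module.End.eigenspace (LieAlgebra.ad ℂ g h) c,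
        B f z = 0 := by
      intro c hc z hz
      rw [Module.End.mem_eigenspace_iff, LieAlgebra.ad_apply] at hz
      have h1 : B f ⁅h, z⁆ = c * B f z := by rw [hz, map_smul, smul_eq_mul]
      have h2 : B f ⁅h, z⁆ = 2 * B f z := by
        rw [← hinv f h z]
        have : ⁅f, h⁆ = (2 : ℂ) • f := by
          rw [← lie_skew, hhf]; simp
        rw [this, map_smul, LinearMap.smul_apply, smul_eq_mul]
      have h3 : (c - 2) * B f z = 0 := by rw [sub_mul, h1.symm.trans h2]; ring
      rcases mul_eq_zero.mp h3 with hc' | hz'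
      · exact absurd (sub_eq_zero.mp hc') hc
      · exact hz'
    have hBS3 : ∀ z ∈ eigS h 3, B f z = 0 := by
      intro z hz
      refine mem_eigS_induction h hz (C := fun z => B f z = 0) ?_ (map_zero _) ?_
      · intro i hi w hw
        refine hBf (i : ℂ) ?_ w hw
        have h2 : i ≠ 2 := by omega
        intro hcast
        exact h2 (by exact_mod_cast hcast)
      · intro a b ha hb; show B f (a + b) = 0; rw [map_add, ha, hb, add_zero]
    intro x hx y hy
    rw [hm', Submodule.mem_sup] at hx hy
    obtain ⟨a, ha, b, hb, rfl⟩ := hx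
    obtain ⟨a', ha', b', hb', rfl⟩ := hy
    rw [add_lie, lie_add, lie_add, map_add, map_add, map_add]
    rw [hiso a ha a' ha',
      hBS3 _ (eigS_anti h (by norm_num) (lie_eigS_mem h (hl1 ha) hb')),
      hBS3 _ (eigS_anti h (by norm_num) (lie_eigS_mem h hb (hl1 ha'))),
      hBS3 _ (eigS_anti h (by norm_num) (lie_eigS_mem h hb hb'))]
    ring
end
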